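/- arXiv:2208.11275 — 3 statements merged into one kernel-verified Lean document; each statement's English description precedes it below -/
import Mathlib

section
/- Let ε ∈ (0,1) and let m be a positive integer. Then there exists a set P of m points in ℝ² with the following property: every subset Y ⊆ P such that every corridor containing at least ⌈ε·m⌉ points of P contains a point of Y, must satisfy |Y| ≥ m − ⌈ε·m⌉ + 1. In other words, any weak ε-net for corridors for P that is restricted to be a subset of P has size at least m − ⌈ε·m⌉ + 1. -/
noncomputable section

/-- The corridor of a set `F` of affine functions `ℝ → ℝ`: the union of the graphs of all
convex combinations of functions in `F` (taken in the vector space of affine functions). -/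
def corr (F : Set (ℝ →ᵃ[ℝ] ℝ)) : Set (ℝ × ℝ) :=
  {p | ∃ g ∈ convexHull ℝ F, p.2 = g p.1}

/-- Tangent line to the parabola `y = x²` at `x = a`. -/
def tang (a : ℝ) : ℝ →ᵃ[ℝ] ℝ where
  toFun x := 2*a*x - a^2
  linear := (2*a) • LinearMap.id
  map_vadd' p v := by
    simp only [LinearMap.smul_apply, LinearMap.id_apply, smul_eq_mul, vadd_eq_add]
    ring

@[simp] lemma tang_apply (a x : ℝ) : tang a x = 2*a*x - a^2 := rfl

/-- Evaluation at a point as a linear map on affine maps. -/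
def evalLM (x : ℝ) : (ℝ →ᵃ[ℝ] ℝ) →ₗ[ℝ] ℝ where
  toFun f := f x
  map_add' _ _ := rfl
  map_smul' _ _ := rfl

/-- If `p` is in the corridor of `F`, then some `f ∈ F` satisfies `p.2 ≤ f p.1`. -/
lemma exists_ge_of_mem_corr {F : Set (ℝ →ᵃ[ℝ] ℝ)} {p : ℝ × ℝ} (hp : p ∈ corr F) :
    ∃ f ∈ F, p.2 ≤ f p.1 := by
  obtain ⟨g, hg, hpg⟩ := hp
  by_contra hcon
  push_neg at hcon
  have hmem : evalLM p.1 g ∈ convexHull ℝ ((evalLM p.1) '' F) := by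
    rw [← (evalLM p.1).image_convexHull]
    exact Set.mem_image_of_mem _ hg
  have hsub : convexHull ℝ ((evalLM p.1) '' F) ⊆ Set.Iio p.2 := by
    apply convexHull_min _ (convex_Iio _)
    rintro _ ⟨f, hf, rfl⟩
    exact hcon f hf
  have : g p.1 < p.2 := hsub hmem
  rw [hpg] at this
  exact lt_irrefl _ this

/-- Lower bound for weak ε-nets for corridors restricted to be subsets of the point set:
there is a set `P` of `m` points such that any such net has size at least `m - ⌈εm⌉ + 1`. -/
theorem strong_nets_for_corridors_lower_bound :
    ∀ ε : ℝ, ε ∈ Set.Ioo (0 : ℝ) 1 →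
      ∀ m : ℕ, 0 < m →
        ∃ P : Finset (ℝ × ℝ), P.card = m ∧
          ∀ Y : Finset (ℝ × ℝ), Y ⊆ P →
            (∀ F : Finset (ℝ →ᵃ[ℝ] ℝ),
              ⌈ε * m⌉ ≤ ((corr ↑F ∩ ↑P).ncard : ℤ) → (corr ↑F ∩ ↑Y).Nonempty) →
            (m : ℤ) - ⌈ε * m⌉ + 1 ≤ (Y.card : ℤ) := by
  intro ε hε m hm
  have hinj : Function.Injective (fun i : ℕ => ((i : ℝ), (i : ℝ)^2)) := by
    intro i j hij
    exact Nat.cast_injective (congrArg Prod.fst hij)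
  classical
  refine ⟨(Finset.range m).image (fun i : ℕ => ((i : ℝ), (i : ℝ)^2)), ?_, ?_⟩
  · rw [Finset.card_image_of_injective _ hinj, Finset.card_range]
  set P : Finset (ℝ × ℝ) := (Finset.range m).image (fun i : ℕ => ((i : ℝ), (i : ℝ)^2)) with hP
  have hPcard : P.card = m := by
    rw [hP, Finset.card_image_of_injective _ hinj, Finset.card_range]
  have hPpar : ∀ p ∈ P, p.2 = p.1 ^ 2 := by
    intro p hp
    simp only [hP, Finset.mem_image] at hp
    obtain ⟨i, _, rfl⟩ := hp; rfl
  intro Y hYP hnet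
  by_contra hlt
  push_neg at hlt
  have hk0 : 0 < ⌈ε * m⌉ := by
    have : (0:ℝ) < ε * m := mul_pos hε.1 (by exact_mod_cast hm)
    exact Int.ceil_pos.mpr this
  set k : ℕ := (⌈ε * m⌉).toNat with hkdef
  have hkcast : (k : ℤ) = ⌈ε * m⌉ := Int.toNat_of_nonneg hk0.le
  rw [← hkcast] at hlt hnet
  -- Y misses at least k points of P
  have hcard : k ≤ (P \ Y).card := by
    have h1 : (P \ Y).card = m - Y.card := by
      rw [Finset.card_sdiff_of_subset hYP, hPcard]
    have h2 : Y.card ≤ P.card := Finset.card_le_card hYP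
    rw [hPcard] at h2
    omega
  obtain ⟨S, hSsub, hScard⟩ := Finset.exists_subset_card_eq hcard
  have hSP : S ⊆ P := hSsub.trans (Finset.sdiff_subset)
  -- Corridor of tangent lines at points of S
  set F : Finset (ℝ →ᵃ[ℝ] ℝ) := S.image (fun p => tang p.1) with hF
  have hkey : corr ↑F ∩ ↑P = (↑S : Set (ℝ × ℝ)) := by
    apply Set.Subset.antisymm
    · rintro p ⟨hpc, hpP⟩
      obtain ⟨f, hf, hle⟩ := exists_ge_of_mem_corr hpc
      simp only [hF, Finset.coe_image, Set.mem_image, Finset.mem_coe] at hf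
      obtain ⟨q, hq, rfl⟩ := hf
      have hp2 : p.2 = p.1 ^ 2 := hPpar p hpP
      rw [hp2, tang_apply] at hle
      have hqp : q.1 = p.1 := by nlinarith [sq_nonneg (p.1 - q.1)]
      have hq2 : q.2 = q.1 ^ 2 := hPpar q (hSP hq)
      have : q = p := Prod.ext hqp (by rw [hq2, hp2, hqp])
      rwa [← this]
    · intro p hp
      have hpP : p ∈ P := hSP hp
      refine ⟨⟨tang p.1, subset_convexHull ℝ _ ?_, ?_⟩, hpP⟩
      · simp only [hF, Finset.coe_image]
        exact Set.mem_image_of_mem _ hp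
      · rw [tang_apply, hPpar p hpP]; ring
  have hbig : (k : ℤ) ≤ ((corr ↑F ∩ ↑P).ncard : ℤ) := by
    rw [hkey, Set.ncard_coe_finset, hScard]
  obtain ⟨p, hpc, hpY⟩ := hnet F hbig
  have hpS : p ∈ S := by
    have : p ∈ corr ↑F ∩ ↑P := ⟨hpc, hYP hpY⟩
    rwa [hkey] at this
  exact (Finset.mem_sdiff.mp (hSsub hpS)).2 hpY
end
end

section
/- There exists a natural number d₀ such that the following holds: for every finite set S of points in ℝ², if for every subset T ⊆ S there exist three affine functions f₁, f₂, f₃ : ℝ → ℝ with corr({f₁, f₂, f₃}) ∩ S = T, then |S| ≤ d₀. In other words, the range space whose ground set is ℝ² and whose ranges are corridors formed by 3 lines has VC dimension O(1). -/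
noncomputable section

namespace CorridorVC

open Finset Filter

/-- evaluation at a point, as a linear map on affine functions -/
def evalLM (x : ℝ) : (ℝ →ᵃ[ℝ] ℝ) →ₗ[ℝ] ℝ where
  toFun f := f x
  map_add' f g := by simp
  map_smul' c f := by simp

lemma mem_corr_iff (f₁ f₂ f₃ : ℝ →ᵃ[ℝ] ℝ) (p : ℝ × ℝ) :
    p ∈ corr {f₁, f₂, f₃} ↔
      ((f₁ p.1 ≤ p.2 ∨ f₂ p.1 ≤ p.2 ∨ f₃ p.1 ≤ p.2) ∧
       (p.2 ≤ f₁ p.1 ∨ p.2 ≤ f₂ p.1 ∨ p.2 ≤ f₃ p.1)) := by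
  constructor
  · rintro ⟨g, hg, hy⟩
    have himg : (evalLM p.1) g ∈ convexHull ℝ ((evalLM p.1) '' {f₁, f₂, f₃}) := by
      rw [← LinearMap.image_convexHull]
      exact Set.mem_image_of_mem _ hg
    have himg' : (evalLM p.1) '' {f₁, f₂, f₃} =
        {f₁ p.1, f₂ p.1, f₃ p.1} := by
      simp [Set.image_insert_eq, evalLM]
    rw [himg'] at himg
    set m := min (f₁ p.1) (min (f₂ p.1) (f₃ p.1)) with hm
    set M := max (f₁ p.1) (max (f₂ p.1) (f₃ p.1)) with hM
    have hsub : ({f₁ p.1, f₂ p.1, f₃ p.1} : Set ℝ) ⊆ Set.Icc m M := by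
      intro z hz
      rcases hz with rfl | rfl | rfl <;>
        constructor <;> simp [hm, hM, le_max_iff, min_le_iff, le_refl, le_total]
    have : (evalLM p.1) g ∈ Set.Icc m M := convexHull_min hsub (convex_Icc m M) himg
    have hy' : m ≤ p.2 ∧ p.2 ≤ M := by
      rw [hy]; exact ⟨this.1, this.2⟩
    constructor
    · have := hy'.1
      rw [hm] at this
      rcases min_le_iff.mp this with h | h
      · exact Or.inl h
      · rcases min_le_iff.mp h with h | h
        · exact Or.inr (Or.inl h)
        · exact Or.inr (Or.inr h)
    · have := hy'.2
      rw [hM] at this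
      rcases le_max_iff.mp this with h | h
      · exact Or.inl h
      · rcases le_max_iff.mp h with h | h
        · exact Or.inr (Or.inl h)
        · exact Or.inr (Or.inr h)
  · rintro ⟨hlo, hhi⟩
    have key : ∀ a b : ℝ →ᵃ[ℝ] ℝ, a ∈ ({f₁, f₂, f₃} : Set _) → b ∈ ({f₁, f₂, f₃} : Set _) →
        a p.1 ≤ p.2 → p.2 ≤ b p.1 → p ∈ corr {f₁, f₂, f₃} := by
      intro a b ha hb hab hba
      have hseg : p.2 ∈ segment ℝ (a p.1) (b p.1) := by
        rw [segment_eq_Icc (hab.trans hba)]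
        exact ⟨hab, hba⟩
      have : p.2 ∈ (evalLM p.1).toAffineMap '' segment ℝ a b := by
        rw [image_segment]
        exact hseg
      obtain ⟨g, hg, hgy⟩ := this
      exact ⟨g, segment_subset_convexHull ha hb hg, hgy.symm⟩
    rcases hlo with h1 | h1 | h1 <;> rcases hhi with h2 | h2 | h2 <;>
      exact key _ _ (by simp) (by simp) h1 h2

lemma halfplane_vc (s : Finset (ℝ × ℝ))
    (h : ∀ t ⊆ s, ∃ a b c : ℝ,
        s.filter (fun p => 0 < a * p.1 + b * p.2 + c) = t) :
    s.card ≤ 3 := by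
  classical
  by_contra hcard
  push_neg at hcard
  set f : ↥s → ℝ × ℝ := Subtype.val with hf
  have hnotind : ¬ AffineIndependent ℝ f := by
    intro hind
    have h1 := hind.card_le_finrank_succ
    have h2 : Module.finrank ℝ (vectorSpan ℝ (Set.range f)) ≤ 2 := by
      have := Submodule.finrank_le (vectorSpan ℝ (Set.range f))
      simpa using this
    have h3 : Fintype.card ↥s = s.card := Fintype.card_coe s
    omega
  obtain ⟨I, x, hxI, hxIc⟩ := Convex.radon_partition hnotind
  set t : Finset (ℝ × ℝ) := s.filter (fun p => ∃ hp : p ∈ s, (⟨p, hp⟩ : ↥s) ∈ I) with ht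
  obtain ⟨a, b, c, hline⟩ := h t (filter_subset _ _)
  set L : (ℝ × ℝ) →ₗ[ℝ] ℝ :=
    a • LinearMap.fst ℝ ℝ ℝ + b • LinearMap.snd ℝ ℝ ℝ with hL
  have hLapp : ∀ q : ℝ × ℝ, L q = a * q.1 + b * q.2 := by
    intro q; simp [hL]
  have hmemt : ∀ q ∈ s, (q ∈ t ↔ 0 < a * q.1 + b * q.2 + c) := by
    intro q hq
    constructor
    · intro hqt
      have : q ∈ s.filter (fun p => 0 < a * p.1 + b * p.2 + c) := hline ▸ hqt
      exact (mem_filter.mp this).2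
    · intro hq'
      have : q ∈ s.filter (fun p => 0 < a * p.1 + b * p.2 + c) := mem_filter.mpr ⟨hq, hq'⟩
      exact hline ▸ this
  have hUconv : Convex ℝ {q : ℝ × ℝ | 0 < L q + c} := by
    have : {q : ℝ × ℝ | 0 < L q + c} = L ⁻¹' (Set.Ioi (-c)) := by
      ext q; simp [Set.mem_Ioi]; constructor <;> intro <;> linarith
    rw [this]
    exact (convex_Ioi (-c)).linear_preimage L
  have hDconv : Convex ℝ {q : ℝ × ℝ | L q + c ≤ 0} := by
    have : {q : ℝ × ℝ | L q + c ≤ 0} = L ⁻¹' (Set.Iic (-c)) := by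
      ext q; simp [Set.mem_Iic]; constructor <;> intro <;> linarith
    rw [this]
    exact (convex_Iic (-c)).linear_preimage L
  have hxU : x ∈ {q : ℝ × ℝ | 0 < L q + c} := by
    refine convexHull_min ?_ hUconv hxI
    rintro q ⟨j, hj, rfl⟩
    have hjt : (f j) ∈ t := by
      rw [ht, mem_filter]
      exact ⟨j.2, j.2, by simpa [hf] using hj⟩
    have := (hmemt (f j) j.2).mp hjt
    simp only [Set.mem_setOf_eq, hLapp]
    linarith
  have hxD : x ∈ {q : ℝ × ℝ | L q + c ≤ 0} := by
    refine convexHull_min ?_ hDconv hxIc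
    rintro q ⟨j, hj, rfl⟩
    have hjt : (f j) ∉ t := by
      intro hmem
      rw [ht, mem_filter] at hmem
      obtain ⟨-, hp, hpI⟩ := hmem
      apply hj
      have : (⟨f j, hp⟩ : ↥s) = j := Subtype.ext rfl
      rwa [this] at hpI
    have : ¬ (0 < a * (f j).1 + b * (f j).2 + c) := fun hc' => hjt ((hmemt (f j) j.2).mpr hc')
    simp only [Set.mem_setOf_eq, hLapp]
    linarith
  simp only [Set.mem_setOf_eq] at hxU hxD
  linarith

open scoped Classical in
/-- the family of open-halfplane traces on `S` -/
def traces (S : Finset (ℝ × ℝ)) : Finset (Finset (ℝ × ℝ)) :=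
  S.powerset.filter (fun t => ∃ a b c : ℝ,
    t = S.filter (fun p => 0 < a * p.1 + b * p.2 + c))

open scoped Classical in
lemma traces_card_le (S : Finset (ℝ × ℝ)) : (traces S).card ≤ (S.card + 1) ^ 3 := by
  have h1 : (traces S).card ≤ (traces S).shatterer.card := card_le_card_shatterer _
  have h2 : (traces S).shatterer ⊆ S.powerset.filter (fun t => t.card ≤ 3) := by
    intro u hu
    have hsh : (traces S).Shatters u := mem_shatterer.mp hu
    obtain ⟨v, hv, huv⟩ := hsh.exists_superset
    have hvS : v ⊆ S := mem_powerset.mp (mem_filter.mp hv).1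
    have huS : u ⊆ S := huv.trans hvS
    rw [mem_filter, mem_powerset]
    refine ⟨huS, halfplane_vc u ?_⟩
    intro t ht
    obtain ⟨w, hw, hwt⟩ := hsh ht
    obtain ⟨a, b, c, rfl⟩ := (mem_filter.mp hw).2
    refine ⟨a, b, c, ?_⟩
    rw [← hwt]
    ext p
    constructor
    · intro hp
      obtain ⟨hpu, hPp⟩ := mem_filter.mp hp
      exact mem_inter.mpr ⟨hpu, mem_filter.mpr ⟨huS hpu, hPp⟩⟩
    · intro hp
      obtain ⟨hpu, hpS⟩ := mem_inter.mp hp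
      exact mem_filter.mpr ⟨hpu, (mem_filter.mp hpS).2⟩
  have h3 : (S.powerset.filter (fun t => t.card ≤ 3)).card ≤
      ∑ k ∈ Finset.Iic 3, S.card.choose k := by
    have hsub : S.powerset.filter (fun t => t.card ≤ 3) ⊆
        (Finset.Iic 3).biUnion (fun k => S.powersetCard k) := by
      intro t ht
      rw [mem_filter, mem_powerset] at ht
      exact mem_biUnion.mpr ⟨t.card, mem_Iic.mpr ht.2, mem_powersetCard.mpr ⟨ht.1, rfl⟩⟩
    calc (S.powerset.filter (fun t => t.card ≤ 3)).card
        ≤ ((Finset.Iic 3).biUnion (fun k => S.powersetCard k)).card := card_le_card hsub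
      _ ≤ ∑ k ∈ Finset.Iic 3, (S.powersetCard k).card := card_biUnion_le
      _ = ∑ k ∈ Finset.Iic 3, S.card.choose k := by simp [card_powersetCard]
  have h4 : ∑ k ∈ Finset.Iic 3, S.card.choose k ≤ (S.card + 1) ^ 3 := by
    set n := S.card
    have hIic : (Finset.Iic 3 : Finset ℕ) = {0, 1, 2, 3} := rfl
    rw [hIic]
    have e2 : n.choose 2 ≤ n ^ 2 := Nat.choose_le_pow _ _
    have e3 : n.choose 3 ≤ n ^ 3 := Nat.choose_le_pow _ _
    repeat rw [Finset.sum_insert (by decide)]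
    rw [Finset.sum_singleton]
    simp only [Nat.choose_zero_right, Nat.choose_one_right]
    nlinarith [sq_nonneg n]
  calc (traces S).card ≤ (traces S).shatterer.card := h1
    _ ≤ (S.powerset.filter (fun t => t.card ≤ 3)).card := card_le_card h2
    _ ≤ _ := h3.trans h4

lemma exists_growth_bound : ∃ N : ℕ, 2 ≤ N ∧ ∀ n : ℕ, N ≤ n → (n + 1) ^ 18 < 2 ^ n := by
  have ht := tendsto_pow_const_div_const_pow_of_one_lt 36 (one_lt_two (α := ℝ))
  have hev : ∀ᶠ n : ℕ in atTop, (n : ℝ) ^ 36 / 2 ^ n < 1 :=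
    ht.eventually_lt_const one_pos
  obtain ⟨N, hN⟩ := eventually_atTop.mp hev
  refine ⟨max N 2, le_max_right _ _, fun n hn => ?_⟩
  have hN' : N ≤ n := le_trans (le_max_left _ _) hn
  have h2 : 2 ≤ n := le_trans (le_max_right _ _) hn
  have hr : (n : ℝ) ^ 36 < 2 ^ n := by
    have := hN n hN'
    rwa [div_lt_one (by positivity)] at this
  have hn36 : n ^ 36 < 2 ^ n := by
    have : ((n ^ 36 : ℕ) : ℝ) < ((2 ^ n : ℕ) : ℝ) := by push_cast; exact hr
    exact_mod_cast this
  have h1 : n + 1 ≤ n ^ 2 := by nlinarith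
  calc (n + 1) ^ 18 ≤ (n ^ 2) ^ 18 := Nat.pow_le_pow_left h1 18
    _ = n ^ 36 := by ring
    _ < 2 ^ n := hn36

/-- a line's function written in slope/intercept form -/
lemma affine_apply (g : ℝ →ᵃ[ℝ] ℝ) (x : ℝ) : g x = g.linear 1 * x + g 0 := by
  have h1 : g x = g.linear x + g 0 := by
    conv_lhs => rw [AffineMap.decomp g]
    simp
  have h2 : g.linear x = x * g.linear 1 := by
    have := g.linear.map_smul x 1
    simpa [smul_eq_mul] using this
  rw [h1, h2]; ring

/-- points of `S` strictly below the line `g` -/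
def upperTr (S : Finset (ℝ × ℝ)) (g : ℝ →ᵃ[ℝ] ℝ) : Finset (ℝ × ℝ) :=
  S.filter (fun p => 0 < g p.1 - p.2)

/-- points of `S` strictly above the line `g` -/
def lowerTr (S : Finset (ℝ × ℝ)) (g : ℝ →ᵃ[ℝ] ℝ) : Finset (ℝ × ℝ) :=
  S.filter (fun p => 0 < p.2 - g p.1)

open scoped Classical in
lemma upperTr_mem_traces (S : Finset (ℝ × ℝ)) (g : ℝ →ᵃ[ℝ] ℝ) : upperTr S g ∈ traces S := by
  rw [traces, mem_filter, mem_powerset]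
  refine ⟨filter_subset _ _, g.linear 1, -1, g 0, ?_⟩
  rw [upperTr]
  refine filter_congr fun p hp => ?_
  rw [affine_apply g p.1]
  constructor <;> intro <;> linarith

open scoped Classical in
lemma lowerTr_mem_traces (S : Finset (ℝ × ℝ)) (g : ℝ →ᵃ[ℝ] ℝ) : lowerTr S g ∈ traces S := by
  rw [traces, mem_filter, mem_powerset]
  refine ⟨filter_subset _ _, -(g.linear 1), 1, -(g 0), ?_⟩
  rw [lowerTr]
  refine filter_congr fun p hp => ?_
  rw [affine_apply g p.1]
  constructor <;> intro <;> linarith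

lemma mem_corr_AB (S : Finset (ℝ × ℝ)) {p : ℝ × ℝ} (hp : p ∈ S) (f₁ f₂ f₃ : ℝ →ᵃ[ℝ] ℝ) :
    p ∈ corr {f₁, f₂, f₃} ↔
      (¬(p ∈ upperTr S f₁ ∧ p ∈ upperTr S f₂ ∧ p ∈ upperTr S f₃) ∧
       ¬(p ∈ lowerTr S f₁ ∧ p ∈ lowerTr S f₂ ∧ p ∈ lowerTr S f₃)) := by
  rw [mem_corr_iff]
  simp only [upperTr, lowerTr, mem_filter, hp, true_and, sub_pos]
  constructor
  · rintro ⟨h1, h2⟩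
    constructor
    · rintro ⟨a1, a2, a3⟩
      rcases h1 with h | h | h <;> linarith
    · rintro ⟨b1, b2, b3⟩
      rcases h2 with h | h | h <;> linarith
  · rintro ⟨h1, h2⟩
    constructor
    · by_contra hc
      push_neg at hc
      exact h1 ⟨by linarith [hc.1], by linarith [hc.2.1], by linarith [hc.2.2]⟩
    · by_contra hc
      push_neg at hc
      exact h2 ⟨by linarith [hc.1], by linarith [hc.2.1], by linarith [hc.2.2]⟩

end CorridorVC

open CorridorVC Finset

/-- The range space of corridors formed by 3 lines has VC dimension O(1): there is a bound
`d₀` so that no finite point set of larger cardinality can be shattered by such corridors. -/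
theorem corridors_of_three_lines_VC_dim :
    ∃ d₀ : ℕ,
      ∀ S : Finset (ℝ × ℝ),
        (∀ T ⊆ S, ∃ f₁ f₂ f₃ : ℝ →ᵃ[ℝ] ℝ,
          (↑S : Set (ℝ × ℝ)) ∩ corr {f₁, f₂, f₃} = (↑T : Set (ℝ × ℝ))) →
        S.card ≤ d₀ := by
  classical
  obtain ⟨N, hN2, hN⟩ := exists_growth_bound
  refine ⟨N, fun S hS => ?_⟩
  by_contra hbig
  push_neg at hbig
  set n := S.card with hn
  choose F1 F2 F3 hF using hS
  set 𝒜 := traces S with h𝒜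
  set P := 𝒜 ×ˢ 𝒜 ×ˢ 𝒜 ×ˢ 𝒜 ×ˢ 𝒜 ×ˢ 𝒜 with hP
  set Φ : Finset (ℝ × ℝ) →
      Finset (ℝ × ℝ) × Finset (ℝ × ℝ) × Finset (ℝ × ℝ) ×
      Finset (ℝ × ℝ) × Finset (ℝ × ℝ) × Finset (ℝ × ℝ) :=
    fun T => if hT : T ⊆ S then
      (upperTr S (F1 T hT), upperTr S (F2 T hT), upperTr S (F3 T hT),
       lowerTr S (F1 T hT), lowerTr S (F2 T hT), lowerTr S (F3 T hT))
    else (∅, ∅, ∅, ∅, ∅, ∅) with hΦ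
  -- characterization of membership in T via the traces
  have hch : ∀ (T : Finset (ℝ × ℝ)) (hT : T ⊆ S) (p : ℝ × ℝ),
      p ∈ T ↔ p ∈ S ∧
        (¬(p ∈ upperTr S (F1 T hT) ∧ p ∈ upperTr S (F2 T hT) ∧ p ∈ upperTr S (F3 T hT)) ∧
         ¬(p ∈ lowerTr S (F1 T hT) ∧ p ∈ lowerTr S (F2 T hT) ∧ p ∈ lowerTr S (F3 T hT))) := by
    intro T hT p
    have hset := Set.ext_iff.mp (hF T hT) p
    simp only [Set.mem_inter_iff, Finset.mem_coe] at hset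
    constructor
    · intro hpT
      have hpS : p ∈ S := hT hpT
      have hpc : p ∈ corr {F1 T hT, F2 T hT, F3 T hT} := (hset.mpr hpT).2
      exact ⟨hpS, (mem_corr_AB S hpS _ _ _).mp hpc⟩
    · rintro ⟨hpS, hcond⟩
      exact hset.mp ⟨hpS, (mem_corr_AB S hpS _ _ _).mpr hcond⟩
  have hmaps : ∀ T ∈ S.powerset, Φ T ∈ P := by
    intro T hT'
    have hT : T ⊆ S := mem_powerset.mp hT'
    rw [hΦ]
    simp only [dif_pos hT, hP, Finset.mem_product]
    exact ⟨upperTr_mem_traces S _, upperTr_mem_traces S _, upperTr_mem_traces S _,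
      lowerTr_mem_traces S _, lowerTr_mem_traces S _, lowerTr_mem_traces S _⟩
  have hinj : Set.InjOn Φ ↑S.powerset := by
    intro T hT' T2 hT2' heq
    have hT : T ⊆ S := mem_powerset.mp (Finset.mem_coe.mp hT')
    have hT2 : T2 ⊆ S := mem_powerset.mp (Finset.mem_coe.mp hT2')
    rw [hΦ] at heq
    simp only [dif_pos hT, dif_pos hT2, Prod.mk.injEq] at heq
    obtain ⟨e1, e2, e3, e4, e5, e6⟩ := heq
    ext p
    rw [hch T hT p, hch T2 hT2 p, e1, e2, e3, e4, e5, e6]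
  have hcount : 2 ^ n ≤ (n + 1) ^ 18 := by
    have hle : S.powerset.card ≤ P.card := Finset.card_le_card_of_injOn Φ hmaps hinj
    have hpow : S.powerset.card = 2 ^ n := by rw [card_powerset, hn]
    have hPcard : P.card = 𝒜.card ^ 6 := by
      rw [hP]
      simp only [Finset.card_product]
      ring
    have h𝒜c : 𝒜.card ≤ (n + 1) ^ 3 := traces_card_le S
    calc 2 ^ n = S.powerset.card := hpow.symm
      _ ≤ P.card := hle
      _ = 𝒜.card ^ 6 := hPcard
      _ ≤ ((n + 1) ^ 3) ^ 6 := Nat.pow_le_pow_left h𝒜c 6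
      _ = (n + 1) ^ 18 := by ring
  exact absurd hcount (not_le.mpr (hN n (le_of_lt hbig)))
end
end

section
/- Let P be a finite set of points in ℝ² and let φ ∈ (0,1] satisfy φ·|P| ≥ 1. Then there exists a set L of at most ⌈2/φ⌉ (parallel) lines in ℝ² that is a halving set for the single-set instance (P, φ); that is, every convex set C ⊆ ℝ² satisfying, for each ℓ ∈ L, either C ∩ ℓ = ∅ or C ⊆ ℓ, contains at most φ·|P| points of P. In particular, for an instance with k sets P₁,…,P_k and fractions φ₁,…,φ_k with φ_i·|P_i| ≥ 1 for all i, a halving set of size at most Σ_i ⌈2/φ_i⌉ = O(k/min_i φ_i) exists. -/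
noncomputable section

/-- A line in `ℝ²`: a one-dimensional affine subspace. -/
def IsLine (l : Set (ℝ × ℝ)) : Prop :=
  ∃ p v : ℝ × ℝ, v ≠ 0 ∧ l = {x | ∃ t : ℝ, x = p + t • v}

/-- A set `L` of lines is a halving set for the instance `(P₁,φ₁,…,P_k,φ_k)` if every convex
set `C` that, for each line `ℓ ∈ L`, either misses `ℓ` or is contained in `ℓ` (i.e. every
cell of the arrangement of `L`, of any dimension) satisfies `|C ∩ Pᵢ| ≤ φᵢ|Pᵢ|` for all `i`. -/
def IsHalvingSet {k : ℕ} (P : Fin k → Finset (ℝ × ℝ)) (φ : Fin k → ℝ)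
    (L : Set (Set (ℝ × ℝ))) : Prop :=
  ∀ C : Set (ℝ × ℝ), Convex ℝ C → (∀ l ∈ L, C ∩ l = ∅ ∨ C ⊆ l) →
    ∀ i, ((C ∩ ↑(P i)).ncard : ℝ) ≤ φ i * ((P i).card : ℝ)


lemma exists_good_t (P : Finset (ℝ × ℝ)) :
    ∃ t : ℝ, Set.InjOn (fun x : ℝ × ℝ => x.1 + t * x.2) ↑P := by
  have hfin : (⋃ p ∈ P, ⋃ q ∈ P,
      {t : ℝ | p ≠ q ∧ p.1 + t * p.2 = q.1 + t * q.2}).Finite := by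
    refine Set.Finite.biUnion P.finite_toSet fun p _ =>
      Set.Finite.biUnion P.finite_toSet fun q _ => ?_
    by_cases hpq : p = q
    · simp [hpq]
    · by_cases h2 : p.2 = q.2
      · have : {t : ℝ | p ≠ q ∧ p.1 + t * p.2 = q.1 + t * q.2} = ∅ := by
          ext u
          simp only [Set.mem_setOf_eq, Set.mem_empty_iff_false, iff_false, not_and]
          intro hne heq
          exact hne (Prod.ext (by rw [h2] at heq; linarith) h2)
        rw [this]; exact Set.finite_empty
      · apply Set.Finite.subset (Set.finite_singleton ((q.1 - p.1)/(p.2 - q.2)))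
        rintro u ⟨hne, heq⟩
        have h2' : p.2 - q.2 ≠ 0 := sub_ne_zero.mpr h2
        simp only [Set.mem_singleton_iff]
        field_simp
        linarith
  obtain ⟨t, ht⟩ := (Set.Finite.infinite_compl hfin).nonempty
  refine ⟨t, fun p hp q hq heq => ?_⟩
  by_contra hne
  apply ht
  simp only [Set.mem_iUnion, Set.mem_setOf_eq]
  exact ⟨p, hp, q, hq, hne, heq⟩



set_option maxHeartbeats 2000000 in
lemma single_halving (P : Finset (ℝ × ℝ)) (φ : ℝ) (hφ : φ ∈ Set.Ioc (0:ℝ) 1)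
    (h1 : 1 ≤ φ * (P.card : ℝ)) :
    ∃ (L : Finset (Set (ℝ × ℝ))) (v : ℝ × ℝ), v ≠ 0 ∧
      (∀ l ∈ L, ∃ p : ℝ × ℝ, l = {x : ℝ × ℝ | ∃ t : ℝ, x = p + t • v}) ∧
      L.card ≤ ⌈2/φ⌉₊ ∧
      ∀ C : Set (ℝ × ℝ), Convex ℝ C → (∀ l ∈ L, C ∩ l = ∅ ∨ C ⊆ l) →
        ((C ∩ ↑P).ncard : ℝ) ≤ φ * (P.card : ℝ) := by
  classical
  obtain ⟨hφ0, hφ1⟩ := hφ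
  obtain ⟨t, ht⟩ := exists_good_t P
  set f : ℝ × ℝ → ℝ := fun x => x.1 + t * x.2 with hf
  set n := P.card with hn
  have hn1 : 1 ≤ n := by
    by_contra h
    push_neg at h
    have : n = 0 := by omega
    rw [this] at h1
    norm_num at h1
  have hnR : (1:ℝ) ≤ (n:ℝ) := by exact_mod_cast hn1
  set b := ⌊φ * (n:ℝ)⌋₊ with hb
  have hb1 : 1 ≤ b := Nat.le_floor (by exact_mod_cast h1)
  have hbR : (b:ℝ) ≤ φ * n := Nat.floor_le (by positivity)
  have hbR2 : φ * n < (b:ℝ) + 1 := Nat.lt_floor_add_one _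
  set m := (n-1)/b with hm
  have hmb : m * b ≤ n - 1 := Nat.div_mul_le_self _ _
  have hmod : m * b + (n-1) % b = n - 1 := by
    rw [hm, Nat.mul_comm]; exact Nat.div_add_mod _ _
  have hmodlt : (n-1) % b < b := Nat.mod_lt _ (by omega)
  have hnm : n ≤ m * b + b := by omega
  have hmcard : m ≤ ⌈2/φ⌉₊ := by
    have h2 : (m:ℝ) * b ≤ (n:ℝ) - 1 := by
      have : ((m*b : ℕ) : ℝ) ≤ ((n-1 : ℕ) : ℝ) := by exact_mod_cast hmb
      push_cast [Nat.cast_sub hn1] at this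
      linarith
    have hmle : (m:ℝ) ≤ 2/φ := by
      rw [le_div_iff₀ hφ0]
      have hbpos : (0:ℝ) < b := by exact_mod_cast hb1
      have h2b : φ * n < 2 * b := by
        have : (1:ℝ) ≤ b := by exact_mod_cast hb1
        linarith
      nlinarith [mul_pos hφ0 (lt_of_lt_of_le one_pos hnR)]
    have := hmle.trans (Nat.le_ceil (2/φ))
    exact_mod_cast this
  set Q := P.image f with hQdef
  have hQ : Q.card = n := Finset.card_image_of_injOn ht
  set e := Q.orderIsoOfFin hQ with he
  set c : Fin n → ℝ := fun i => ((e i : ℝ)) with hcdef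
  have hc : StrictMono c := fun i j hij => by
    have := e.strictMono hij
    exact_mod_cast this
  -- cut indices
  have hcut_lt : ∀ j, j < m → (j+1)*b - 1 < n := by
    intro j hj
    have : (j+1)*b ≤ m*b := Nat.mul_le_mul_right b hj
    omega
  set cutIdx : ℕ → Fin n := fun j => ⟨min ((j+1)*b - 1) (n-1), by omega⟩ with hcutIdx
  have hcutIdx_eq : ∀ j, j < m → (cutIdx j : ℕ) = (j+1)*b - 1 := by
    intro j hj
    have := hcut_lt j hj
    simp only [hcutIdx]
    omega
  set D : ℕ → ℝ := fun j => c (cutIdx j) with hD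
  set L : Finset (Set (ℝ × ℝ)) :=
    (Finset.range m).image (fun j => {x : ℝ × ℝ | f x = D j}) with hL
  have hv : ((-t, 1) : ℝ × ℝ) ≠ 0 := by
    intro h
    exact one_ne_zero (congrArg Prod.snd h)
  have hline : ∀ r : ℝ, {x : ℝ × ℝ | f x = r}
      = {x : ℝ × ℝ | ∃ s : ℝ, x = (r, 0) + s • ((-t, 1) : ℝ × ℝ)} := by
    intro r
    ext x
    simp only [Set.mem_setOf_eq, hf, Prod.smul_mk, smul_eq_mul, Prod.mk_add_mk, Prod.ext_iff]
    constructor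
    · intro h
      exact ⟨x.2, by constructor <;> [skip; skip] <;> simp <;> linarith⟩
    · rintro ⟨s, h1', h2'⟩
      rw [h1', h2']; ring
  refine ⟨L, (-t, 1), hv, ?_, ?_, ?_⟩
  · intro l hl
    rw [hL] at hl
    obtain ⟨j, _, rfl⟩ := Finset.mem_image.mp hl
    exact ⟨(D j, 0), hline (D j)⟩
  · rw [hL]
    calc ((Finset.range m).image _).card ≤ (Finset.range m).card := Finset.card_image_le
      _ = m := Finset.card_range m
      _ ≤ ⌈2/φ⌉₊ := hmcard
  -- the main counting argument
  intro C hC hcutC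
  have hcut' : ∀ j, j < m → C ∩ {x : ℝ × ℝ | f x = D j} = ∅ ∨ C ⊆ {x : ℝ × ℝ | f x = D j} := by
    intro j hj
    exact hcutC _ (by rw [hL]; exact Finset.mem_image_of_mem _ (Finset.mem_range.mpr hj))
  set S := C ∩ ↑P with hS
  have hSfin : S.Finite := P.finite_toSet.subset Set.inter_subset_right
  have hSP : ∀ x ∈ S, x ∈ P := fun x hx => hx.2
  by_cases hA : ∃ j, j < m ∧ C ⊆ {x : ℝ × ℝ | f x = D j}
  · obtain ⟨j, hj, hCl⟩ := hA
    have hsub : S.Subsingleton := by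
      intro p hp q hq
      have h1' : f p = D j := hCl hp.1
      have h2' : f q = D j := hCl hq.1
      exact ht (hp.2) (hq.2) (by rw [h1', h2'])
    have hcc : S.ncard ≤ 1 := by
      rcases hsub.eq_empty_or_singleton with h | ⟨x, h⟩ <;> simp [h]
    have : (S.ncard : ℝ) ≤ 1 := by exact_mod_cast hcc
    linarith
  · push_neg at hA
    have hdisj : ∀ j, j < m → ∀ x ∈ C, f x ≠ D j := by
      intro j hj x hx heq
      rcases hcut' j hj with h | h
      · exact absurd (Set.mem_inter hx heq) (by rw [h]; exact Set.notMem_empty x)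
      · exact hA j hj h
    have hside : ∀ j, j < m → (∀ x ∈ C, f x < D j) ∨ (∀ x ∈ C, D j < f x) := by
      intro j hj
      by_contra hcon
      push_neg at hcon
      obtain ⟨⟨x, hx, hx'⟩, ⟨y, hy, hy'⟩⟩ := hcon
      have hx2 : D j < f x := lt_of_le_of_ne hx' (Ne.symm (hdisj j hj x hx))
      have hy2 : f y < D j := lt_of_le_of_ne hy' (hdisj j hj y hy)
      set u := (D j - f y)/(f x - f y) with hu
      have hxy : 0 < f x - f y := by linarith
      have hu0 : 0 ≤ u := div_nonneg (by linarith) (by linarith)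
      have hu1 : u ≤ 1 := by rw [div_le_one hxy]; linarith
      have hz : (1-u) • y + u • x ∈ C := hC hy hx (by linarith) hu0 (by ring)
      have hfz : f ((1-u) • y + u • x) = D j := by
        simp only [hf, Prod.smul_def, smul_eq_mul, Prod.fst_add, Prod.snd_add,
          Prod.smul_fst, Prod.smul_snd]
        have : u * (f x - f y) = D j - f y := by
          rw [hu]; field_simp
        simp only [hf] at this
        ring_nf
        ring_nf at this
        linarith
      exact hdisj j hj _ hz hfz
    rcases S.eq_empty_or_nonempty with hSe | ⟨x₀, hx₀⟩
    · rw [hSe]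
      simp only [Set.ncard_empty, Nat.cast_zero]
      linarith
    set J := (Finset.range m).filter (fun j => D j < f x₀) with hJ
    set j0 := J.card with hj0
    have hj0m : j0 ≤ m := by
      have : J ⊆ Finset.range m := Finset.filter_subset _ _
      calc j0 ≤ (Finset.range m).card := Finset.card_le_card this
        _ = m := Finset.card_range m
    have hDmono : ∀ j j', j' < m → j ≤ j' → D j ≤ D j' := by
      intro j j' hj' hjj
      apply hc.monotone
      simp only [hcutIdx, Fin.mk_le_mk]
      have : (j+1)*b ≤ (j'+1)*b := Nat.mul_le_mul_right b (by omega)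
      omega
    have hdown : ∀ j j', j' ∈ J → j ≤ j' → j ∈ J := by
      intro j j' hj' hjj
      simp only [hJ, Finset.mem_filter, Finset.mem_range] at hj' ⊢
      exact ⟨by omega, lt_of_le_of_lt (hDmono j j' hj'.1 hjj) hj'.2⟩
    have hup : ∀ j, j0 ≤ j → j < m → ¬ (D j < f x₀) := by
      intro j hj hjm hDj
      have hsubJ : Finset.range (j+1) ⊆ J := by
        intro k hk
        simp only [Finset.mem_range] at hk
        exact hdown k j (by simp [hJ, Finset.mem_filter, Finset.mem_range, hjm, hDj]) (by omega)
      have := Finset.card_le_card hsubJ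
      simp only [Finset.card_range] at this
      omega
    have hlow : ∀ j, j < j0 → D j < f x₀ := by
      intro j hj
      by_contra hDj
      have hsubJ : J ⊆ Finset.range j := by
        intro k hk
        simp only [Finset.mem_range]
        by_contra hk'
        push_neg at hk'
        exact hDj ((Finset.mem_filter.mp (hdown j k hk hk')).2)
      have := Finset.card_le_card hsubJ
      simp only [Finset.card_range] at this
      omega
    have hxside : ∀ x ∈ S, (∀ j, j < j0 → D j < f x) ∧ (∀ j, j0 ≤ j → j < m → f x < D j) := by
      intro x hx
      constructor
      · intro j hj
        rcases hside j (by omega) with h | h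
        · exact absurd (h x₀ hx₀.1) (not_lt.mpr (hlow j hj).le)
        · exact h x hx.1
      · intro j hj hjm
        rcases hside j hjm with h | h
        · exact h x hx.1
        · exact absurd (h x₀ hx₀.1) (hup j hj hjm)
    -- index map
    have hfQ : ∀ x ∈ S, f x ∈ Q := by
      intro x hx
      exact Finset.mem_image_of_mem f hx.2
    set g : ℝ × ℝ → ℕ := fun x =>
      if h : f x ∈ Q then ((e.symm ⟨f x, h⟩ : Fin n) : ℕ) else 0 with hg
    have hgS : ∀ x (hx : x ∈ S), g x = ((e.symm ⟨f x, hfQ x hx⟩ : Fin n) : ℕ) := by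
      intro x hx
      simp only [hg, dif_pos (hfQ x hx)]
    have hceg : ∀ x (hx : x ∈ S), c (e.symm ⟨f x, hfQ x hx⟩) = f x := by
      intro x hx
      simp only [hcdef]
      rw [OrderIso.apply_symm_apply]
    have hginj : Set.InjOn g S := by
      intro x hx y hy hxy
      rw [hgS x hx, hgS y hy] at hxy
      have h2 : (e.symm ⟨f x, hfQ x hx⟩) = (e.symm ⟨f y, hfQ y hy⟩) := Fin.val_injective hxy
      have h3 := e.symm.injective h2
      exact ht hx.2 hy.2 (congrArg Subtype.val h3)
    set lo := j0 * b with hlo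
    have hbound : ∀ x ∈ S, lo ≤ g x ∧ g x < lo + b := by
      intro x hx
      set i := (e.symm ⟨f x, hfQ x hx⟩ : Fin n) with hi
      have hgx : g x = (i : ℕ) := hgS x hx
      have hci : c i = f x := hceg x hx
      constructor
      · rcases Nat.eq_zero_or_pos j0 with h0 | h0
        · simp [hlo, h0]
        · have hDlt : D (j0 - 1) < f x := (hxside x hx).1 (j0-1) (by omega)
          rw [← hci, hD] at hDlt
          have hlt : cutIdx (j0-1) < i := hc.lt_iff_lt.mp hDlt
          have hval : (cutIdx (j0-1) : ℕ) = (j0-1+1)*b - 1 := hcutIdx_eq _ (by omega)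
          have h2' : (j0-1+1)*b - 1 < (i:ℕ) := by rw [← hval]; exact hlt
          have h3' : (j0-1+1) = j0 := by omega
          rw [h3'] at h2'
          have hj0b : 1 ≤ j0 * b := Nat.mul_le_mul h0 hb1
          rw [hgx, hlo]
          omega
      · rcases lt_or_ge j0 m with hj | hj
        · have hDgt : f x < D j0 := (hxside x hx).2 j0 le_rfl hj
          rw [← hci, hD] at hDgt
          have hlt : i < cutIdx j0 := hc.lt_iff_lt.mp hDgt
          have hval : (cutIdx j0 : ℕ) = (j0+1)*b - 1 := hcutIdx_eq _ hj
          have h2' : (i:ℕ) < (j0+1)*b - 1 := by rw [← hval]; exact hlt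
          have h4' : (j0+1)*b = j0*b + b := by ring
          rw [hgx, hlo]
          omega
        · have hj0eq : j0 = m := le_antisymm hj0m hj
          have : (i:ℕ) < n := i.isLt
          rw [hgx, hlo, hj0eq]
          omega
    have himg : g '' S ⊆ Set.Ico lo (lo + b) := by
      rintro k ⟨x, hx, rfl⟩
      exact ⟨(hbound x hx).1, (hbound x hx).2⟩
    have h5 : S.ncard = (g '' S).ncard := (Set.ncard_image_of_injOn hginj).symm
    have h7 : (g '' S).ncard ≤ (Set.Ico lo (lo+b)).ncard :=
      Set.ncard_le_ncard himg (Set.finite_Ico _ _)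
    have h8 : (Set.Ico lo (lo+b)).ncard = b := by
      rw [← Finset.coe_Ico, Set.ncard_coe_finset, Nat.card_Ico]
      omega
    have hfinal : S.ncard ≤ b := by omega
    calc (S.ncard : ℝ) ≤ (b : ℝ) := by exact_mod_cast hfinal
      _ ≤ φ * n := hbR

/-- A single point set `P` with fraction `φ` admits a halving set of `⌈2/φ⌉` parallel lines;
in particular, an instance with `k` sets admits a halving set of size `Σᵢ ⌈2/φᵢ⌉`. -/
theorem naive_halving_set :
    (∀ (P : Finset (ℝ × ℝ)) (φ : ℝ), φ ∈ Set.Ioc (0 : ℝ) 1 →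
      1 ≤ φ * (P.card : ℝ) →
      ∃ (L : Finset (Set (ℝ × ℝ))) (v : ℝ × ℝ), v ≠ 0 ∧
        (∀ l ∈ L, ∃ p : ℝ × ℝ, l = {x : ℝ × ℝ | ∃ t : ℝ, x = p + t • v}) ∧
        L.card ≤ ⌈2/φ⌉₊ ∧
        ∀ C : Set (ℝ × ℝ), Convex ℝ C → (∀ l ∈ L, C ∩ l = ∅ ∨ C ⊆ l) →
          ((C ∩ ↑P).ncard : ℝ) ≤ φ * (P.card : ℝ)) ∧
    (∀ (k : ℕ) (P : Fin k → Finset (ℝ × ℝ)) (φ : Fin k → ℝ),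
      (∀ i, φ i ∈ Set.Ioc (0 : ℝ) 1) → (∀ i, 1 ≤ φ i * ((P i).card : ℝ)) →
      ∃ L : Finset (Set (ℝ × ℝ)), (∀ l ∈ L, IsLine l) ∧
        L.card ≤ ∑ i, ⌈2 / φ i⌉₊ ∧ IsHalvingSet P φ (↑L)) := by
  classical
  refine ⟨single_halving, ?_⟩
  intro k P φ hφ h1
  choose L v hv hform hcard hbound using fun i => single_halving (P i) (φ i) (hφ i) (h1 i)
  refine ⟨Finset.univ.biUnion L, ?_, ?_, ?_⟩
  · intro l hl
    obtain ⟨i, _, hli⟩ := Finset.mem_biUnion.mp hl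
    obtain ⟨p, hp⟩ := hform i l hli
    exact ⟨p, v i, hv i, hp⟩
  · calc (Finset.univ.biUnion L).card ≤ ∑ i, (L i).card := Finset.card_biUnion_le
      _ ≤ ∑ i, ⌈2 / φ i⌉₊ := Finset.sum_le_sum (fun i _ => hcard i)
  · intro C hC hcut i
    refine hbound i C hC (fun l hl => ?_)
    exact hcut l (by exact_mod_cast Finset.mem_biUnion.mpr ⟨i, Finset.mem_univ i, hl⟩)
end
end
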